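/- Knight's identity: for all real u ≠ 0 and v, ρ_τ(u − v) − ρ_τ(u) = −v ψ_τ(u) + ∫₀^v (1{u ≤ s} − 1{u ≤ 0}) ds, where ψ_τ(u) = τ − 1{u ≤ 0}. -/
import Mathlib

/-- The quantile check function `ρ_τ(u) = u (τ − 1{u ≤ 0})`. -/
noncomputable def checkFun (τ u : ℝ) : ℝ := u * (τ - if u ≤ 0 then 1 else 0)

/-- `ψ_τ(u) = τ − 1{u ≤ 0}`. -/
noncomputable def psiFun (τ u : ℝ) : ℝ := τ - if u ≤ 0 then 1 else 0

private lemma step_mono (u : ℝ) : Monotone (fun s : ℝ => if u ≤ s then (1:ℝ) else 0) := by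
  intro a b hab
  by_cases h : u ≤ a
  · simp [h, h.trans hab]
  · by_cases h' : u ≤ b <;> simp [h, h']

private lemma step_ii (u a b : ℝ) :
    IntervalIntegrable (fun s : ℝ => if u ≤ s then (1:ℝ) else 0) MeasureTheory.volume a b :=
  (step_mono u).intervalIntegrable

private lemma int_A {u a b : ℝ} (ha : u ≤ a) (hb : u ≤ b) :
    ∫ s in a..b, (if u ≤ s then (1:ℝ) else 0) = b - a := by
  rw [intervalIntegral.integral_congr (g := fun _ => (1:ℝ))]
  · simp
  · intro s hs
    have hus : u ≤ s := le_trans (le_min ha hb) hs.1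
    simp [hus]

private lemma int_B {u a b : ℝ} (ha : a ≤ u) (hb : b ≤ u) :
    ∫ s in a..b, (if u ≤ s then (1:ℝ) else 0) = 0 := by
  rw [intervalIntegral.integral_congr_ae (g := fun _ => (0:ℝ))]
  · simp
  · rw [MeasureTheory.ae_iff]
    refine MeasureTheory.measure_mono_null (fun s hs => ?_) (MeasureTheory.measure_singleton u)
    simp only [Set.mem_setOf_eq, not_forall] at hs
    obtain ⟨hmem, hne⟩ := hs
    have hus : u ≤ s := by by_contra h; exact hne (if_neg h)
    have hsu : s ≤ u := le_trans hmem.2 (max_le ha hb)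
    exact le_antisymm hsu hus

private lemma int_J (u v : ℝ) :
    ∫ s in (0:ℝ)..v, (if u ≤ s then (1:ℝ) else 0) = max v u - max 0 u := by
  rcases le_total u 0 with hu0 | hu0
  · rcases le_total u v with huv | huv
    · rw [int_A hu0 huv, max_eq_left huv, max_eq_left hu0]
    · have hsplit := intervalIntegral.integral_add_adjacent_intervals
        (step_ii u 0 u) (step_ii u u v)
      rw [← hsplit, int_A hu0 le_rfl, int_B le_rfl huv, max_eq_right huv, max_eq_left hu0]
      ring
  · rcases le_total v u with hvu | hvu
    · rw [int_B hu0 hvu, max_eq_right hvu, max_eq_right hu0]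
      ring
    · have hsplit := intervalIntegral.integral_add_adjacent_intervals
        (step_ii u 0 u) (step_ii u u v)
      rw [← hsplit, int_B hu0 le_rfl, int_A le_rfl hvu, max_eq_left hvu, max_eq_right hu0]
      ring

/-- Knight's identity. -/
theorem knight_identity (τ : ℝ) (hτ : τ ∈ Set.Ioo (0:ℝ) 1) (u v : ℝ) (hu : u ≠ 0) :
    checkFun τ (u - v) - checkFun τ u =
      -v * psiFun τ u +
        ∫ s in (0:ℝ)..v, ((if u ≤ s then (1:ℝ) else 0) - (if u ≤ 0 then (1:ℝ) else 0)) := by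
  have hint : (∫ s in (0:ℝ)..v, ((if u ≤ s then (1:ℝ) else 0) - (if u ≤ 0 then (1:ℝ) else 0)))
      = (max v u - max 0 u) - (if u ≤ 0 then (1:ℝ) else 0) * v := by
    rw [intervalIntegral.integral_sub (step_ii u 0 v) (intervalIntegrable_const), int_J]
    simp [mul_comm]
  rw [hint]
  unfold checkFun psiFun
  rcases lt_or_gt_of_ne hu with hneg | hpos
  · have h1 : u ≤ 0 := hneg.le
    rw [if_pos h1, max_eq_left h1]
    rcases le_or_gt u v with h | h
    · rw [if_pos (by linarith : u - v ≤ 0), max_eq_left h]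
      ring
    · rw [if_neg (by push_neg; linarith : ¬ u - v ≤ 0), max_eq_right h.le]
      ring
  · have h1 : ¬ u ≤ 0 := not_le.mpr hpos
    rw [if_neg h1, max_eq_right hpos.le]
    rcases le_or_gt u v with h | h
    · rw [if_pos (by linarith : u - v ≤ 0), max_eq_left h]
      ring
    · rw [if_neg (by push_neg; linarith : ¬ u - v ≤ 0), max_eq_right h.le]
      ring
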